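/- Let θ ∈ (0, π/2) satisfy inequality (3) for some n, and let f: {0,1}^n → {0,1}^n be a bijection. For each input b, the composite operation — applying the bias gates then swapping amplitudes of |0⟩ and |f(b)⟩ — produces a state whose |f(b)⟩-amplitude is (1/√2)^n(cos^(2^n−1)(θ) + Σ_{i=0}^{2^n−2} cos^i(θ) sin(θ)) > 1/√2, so the measured output equals f(b) with probability > 1/2. -/

import Mathlib

open Real Finset

/-- The two-level transformation on `ℝ^(2^n)` acting on coordinates `(0, i)` by the
matrix `[[cos θ, sin θ], [sin θ, -cos θ]]`, leaving all other coordinates fixed. -/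
noncomputable def twoLevelBias (θ : ℝ) (n : ℕ) (i : ℕ) (v : Fin (2 ^ n) → ℝ) :
    Fin (2 ^ n) → ℝ :=
  haveI : NeZero (2 ^ n) := ⟨pow_ne_zero n two_ne_zero⟩
  fun j =>
    if j = (0 : Fin (2 ^ n)) then
      Real.cos θ * v 0 + Real.sin θ * v (Fin.ofNat (2 ^ n) i)
    else if j = (Fin.ofNat (2 ^ n) i) then
      Real.sin θ * v 0 - Real.cos θ * v (Fin.ofNat (2 ^ n) i)
    else v j

/-- Apply successively the two-level bias transformations on coordinates `(0, i)` for
`i = k, k-1, …, 1`. -/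
noncomputable def applyBiasGates (θ : ℝ) (n : ℕ) : ℕ → (Fin (2 ^ n) → ℝ) → (Fin (2 ^ n) → ℝ)
  | 0, v => v
  | k + 1, v => applyBiasGates θ n k (twoLevelBias θ n (k + 1) v)

section BiasGates

variable {θ : ℝ} {n : ℕ}

theorem twoLevelBias_apply_zero (i : ℕ) (v : Fin (2 ^ n) → ℝ) :
    twoLevelBias θ n i v 0 = cos θ * v 0 + sin θ * v (Fin.ofNat (2 ^ n) i) := by
  simp [twoLevelBias]

theorem twoLevelBias_apply_of_ne {i : ℕ} {v : Fin (2 ^ n) → ℝ} {j : Fin (2 ^ n)}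
    (hj₀ : j ≠ 0) (hji : j ≠ Fin.ofNat (2 ^ n) i) : twoLevelBias θ n i v j = v j := by
  simp only [twoLevelBias, if_neg hj₀, if_neg hji]

/-- Each gate `(0, i)` sees the current `0`-amplitude and an untouched amplitude `v i = c`,
so the `0`-amplitude evolves as `x ↦ cos θ * x + sin θ * c`. -/
theorem applyBiasGates_apply_zero {k : ℕ} (hk : k < 2 ^ n) {v : Fin (2 ^ n) → ℝ} {c : ℝ}
    (hv : ∀ j : Fin (2 ^ n), j ≠ 0 → (j : ℕ) ≤ k → v j = c) :
    applyBiasGates θ n k v 0 =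
      cos θ ^ k * v 0 + (∑ i ∈ range k, cos θ ^ i * sin θ) * c := by
  induction k generalizing v with
  | zero => simp [applyBiasGates]
  | succ k ih =>
    have hval : (Fin.ofNat (2 ^ n) (k + 1) : ℕ) = k + 1 := Nat.mod_eq_of_lt hk
    have hgate : v (Fin.ofNat (2 ^ n) (k + 1)) = c :=
      hv _ (fun h => by rw [← Fin.val_inj, hval] at h; simp at h) hval.le
    have hrest : ∀ j : Fin (2 ^ n), j ≠ 0 → (j : ℕ) ≤ k → twoLevelBias θ n (k + 1) v j = c :=
      fun j hj₀ hjk => by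
        rw [twoLevelBias_apply_of_ne hj₀ (fun h => by have := congrArg Fin.val h; omega)]
        exact hv j hj₀ (by omega)
    rw [applyBiasGates, ih (by omega) hrest, twoLevelBias_apply_zero, hgate, sum_range_succ]
    ring

theorem applyBiasGates_const_apply_zero (c : ℝ) :
    applyBiasGates θ n (2 ^ n - 1) (fun _ => c) 0 =
      c * (cos θ ^ (2 ^ n - 1) + ∑ i ∈ range (2 ^ n - 1), cos θ ^ i * sin θ) := by
  rw [applyBiasGates_apply_zero (by have := Nat.one_le_two_pow (n := n); omega)
    (fun _ _ _ => rfl)]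
  ring

end BiasGates

theorem half_lt_sq_of_inv_sqrt_two_lt {x : ℝ} (hx : 1 / √2 < x) : 1 / 2 < x ^ 2 := by
  calc (1 : ℝ) / 2 = (1 / √2) ^ 2 := by rw [div_pow, one_pow, sq_sqrt zero_le_two]
    _ < x ^ 2 := pow_lt_pow_left₀ hx (by positivity) two_ne_zero

theorem stmt_18_general (n : ℕ) (θ : ℝ)
    (hineq : (1 / Real.sqrt 2) ^ n *
        (Real.cos θ ^ (2 ^ n - 1) +
          ∑ i ∈ Finset.range (2 ^ n - 1), Real.cos θ ^ i * Real.sin θ)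
      > 1 / Real.sqrt 2)
    (f : Fin (2 ^ n) ≃ Fin (2 ^ n)) (b : Fin (2 ^ n)) :
    haveI : NeZero (2 ^ n) := ⟨pow_ne_zero n two_ne_zero⟩
    -- `w` is the state after the Hadamard (uniform amplitudes) and the bias gates;
    -- `s` is the result of swapping the amplitudes of `|0⟩` and `|f b⟩`.
    let w : Fin (2 ^ n) → ℝ := applyBiasGates θ n (2 ^ n - 1) (fun _ => (1 / Real.sqrt 2) ^ n)
    let s : Fin (2 ^ n) → ℝ := Function.update (Function.update w 0 (w (f b))) (f b) (w 0)
    s (f b) = (1 / Real.sqrt 2) ^ n *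
        (Real.cos θ ^ (2 ^ n - 1) +
          ∑ i ∈ Finset.range (2 ^ n - 1), Real.cos θ ^ i * Real.sin θ) ∧
    s (f b) > 1 / Real.sqrt 2 ∧
    s (f b) ^ 2 > 1 / 2 := by
  intro w s
  have hs : s (f b) = (1 / √2) ^ n *
      (cos θ ^ (2 ^ n - 1) + ∑ i ∈ range (2 ^ n - 1), cos θ ^ i * sin θ) := by
    simp only [s, Function.update_self]
    exact applyBiasGates_const_apply_zero _
  rw [hs] at *
  exact ⟨rfl, hineq, half_lt_sq_of_inv_sqrt_two_lt hineq⟩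

theorem stmt_18 (n : ℕ) (hn : 1 ≤ n) (θ : ℝ) (hθ : θ ∈ Set.Ioo 0 (Real.pi / 2))
    (hineq : (1 / Real.sqrt 2) ^ n *
        (Real.cos θ ^ (2 ^ n - 1) +
          ∑ i ∈ Finset.range (2 ^ n - 1), Real.cos θ ^ i * Real.sin θ)
      > 1 / Real.sqrt 2)
    (f : Fin (2 ^ n) ≃ Fin (2 ^ n)) (b : Fin (2 ^ n)) :
    haveI : NeZero (2 ^ n) := ⟨pow_ne_zero n two_ne_zero⟩
    -- `w` is the state after the Hadamard (uniform amplitudes) and the bias gates;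
    -- `s` is the result of swapping the amplitudes of `|0⟩` and `|f b⟩`.
    let w : Fin (2 ^ n) → ℝ := applyBiasGates θ n (2 ^ n - 1) (fun _ => (1 / Real.sqrt 2) ^ n)
    let s : Fin (2 ^ n) → ℝ := Function.update (Function.update w 0 (w (f b))) (f b) (w 0)
    s (f b) = (1 / Real.sqrt 2) ^ n *
        (Real.cos θ ^ (2 ^ n - 1) +
          ∑ i ∈ Finset.range (2 ^ n - 1), Real.cos θ ^ i * Real.sin θ) ∧
    s (f b) > 1 / Real.sqrt 2 ∧
    s (f b) ^ 2 > 1 / 2 :=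
  stmt_18_general n θ hineq f b
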